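/- Let k ≥ 2 be an even integer, q a prime power with q ≡ k+1 (mod 2k), and χ_k a multiplicative character of F_q of order k. Let S_k denote the set of nonzero k-th powers in F_q. Then for every a ∈ S_k, as an identity of complex numbers, k^2 · #{ b ∈ F_q : b ∈ S_k and b − a ∈ S_k } = R_k(q) + q − 2k + 1; in particular this count is independent of a. -/

import Mathlib

/-!
The indicator of the nonzero `k`-th powers is `k⁻¹ ∑_{s<k} χ^s`, because the kernel of a character
of order `k` on the cyclic group `F_qˣ` is exactly the subgroup of `k`-th powers. Expanding the
product of two indicators, `k² N = ∑_{s,t} ∑_b χ^s(b) χ^t(b - a)`, and the substitution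
`b = a / x` turns the inner sum into `χ^{s+t}(a) J(χ^{-s-t}, χ^t) = J(χ^{-s-t}, χ^t)`. Since
`χ^s ↦ χ^{-s-t}` permutes the powers of `χ`, the total is `∑_{s,t} J(χ^s, χ^t)`. Splitting off
`s = 0`, `t = 0` and `s + t ≡ 0`, where `J(1,1) = q - 2`, `J(1,ψ) = J(ψ,1) = -1` and
`J(ψ,ψ⁻¹) = -ψ(-1)`, leaves `R_k(q)`; the congruence on `q` makes `-1` a non-`k`-th power, so
`χ(-1) ≠ 1` and `∑_{0<s<k} χ(-1)^s = -1`.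
-/

/-- Jacobi sum `J(A,B) = ∑_{a ∈ F} A(a) B(1-a)`. -/
noncomputable def jac {F : Type} [Field F] [Fintype F] (A B : MulChar F ℂ) : ℂ :=
  ∑ a : F, A a * B (1 - a)

/-- `R_k(q) = ∑_{1 ≤ s,t ≤ k-1, s+t ≢ 0 (k)} J(χ^s, χ^t)`. -/
noncomputable def Rk {F : Type} [Field F] [Fintype F] (k : ℕ) (χ : MulChar F ℂ) : ℂ :=
  ∑ s ∈ Finset.Icc 1 (k - 1), ∑ t ∈ Finset.Icc 1 (k - 1),
    if (s : ZMod k) + t ≠ 0 then jac (χ ^ s) (χ ^ t) else 0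

/-- `R⁻_k(q)`: as `R_k(q)` but with each term multiplied by `(-1)^{s+t}`. -/
noncomputable def Rmk {F : Type} [Field F] [Fintype F] (k : ℕ) (χ : MulChar F ℂ) : ℂ :=
  ∑ s ∈ Finset.Icc 1 (k - 1), ∑ t ∈ Finset.Icc 1 (k - 1),
    if (s : ZMod k) + t ≠ 0 then (-1 : ℂ) ^ (s + t) * jac (χ ^ s) (χ ^ t) else 0

/-- `S_k(q) = ∑_{1 ≤ s,t,v ≤ k-1, s+t,v+t,v-s ≢ 0 (k)} J(χ^s, χ^t) J(χ^{-s}, χ^v)`. -/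
noncomputable def Sk {F : Type} [Field F] [Fintype F] (k : ℕ) (χ : MulChar F ℂ) : ℂ :=
  ∑ s ∈ Finset.Icc 1 (k - 1), ∑ t ∈ Finset.Icc 1 (k - 1), ∑ v ∈ Finset.Icc 1 (k - 1),
    if (s : ZMod k) + t ≠ 0 ∧ (v : ZMod k) + t ≠ 0 ∧ (v : ZMod k) - s ≠ 0 then
      jac (χ ^ s) (χ ^ t) * jac (χ⁻¹ ^ s) (χ ^ v) else 0

/-- `S⁻_k(q)`: as `S_k(q)` but with each term multiplied by `(-1)^{s+t}`. -/
noncomputable def Smk {F : Type} [Field F] [Fintype F] (k : ℕ) (χ : MulChar F ℂ) : ℂ :=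
  ∑ s ∈ Finset.Icc 1 (k - 1), ∑ t ∈ Finset.Icc 1 (k - 1), ∑ v ∈ Finset.Icc 1 (k - 1),
    if (s : ZMod k) + t ≠ 0 ∧ (v : ZMod k) + t ≠ 0 ∧ (v : ZMod k) - s ≠ 0 then
      (-1 : ℂ) ^ (s + t) * (jac (χ ^ s) (χ ^ t) * jac (χ⁻¹ ^ s) (χ ^ v)) else 0

open Finset

namespace MulChar

theorem sum_range_pow_apply {M R : Type*} [CommMonoid M] [CommRing R] [IsDomain R] [DecidableEq R]
    (χ : MulChar M R) {n : ℕ} (hn : χ ^ n = 1) (x : M) :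
    ∑ s ∈ range n, (χ ^ s) x = if χ x = 1 then (n : R) else 0 := by
  by_cases hx : IsUnit x
  · obtain ⟨u, rfl⟩ := hx
    simp only [pow_apply_coe]
    split_ifs with h
    · simp [h]
    · have hgeom := geom_sum_mul (χ u) n
      rw [← pow_apply_coe, hn, one_apply_coe, sub_self] at hgeom
      exact (mul_eq_zero.mp hgeom).resolve_right (sub_ne_zero.mpr h)
  · rw [if_neg (by simp [map_nonunit χ hx])]
    exact sum_eq_zero fun s _ => map_nonunit _ hx

theorem orderOf_apply_generator {M R : Type*} [CommMonoid M] [CommMonoidWithZero R]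
    (χ : MulChar M R) {g : Mˣ} (hg : ∀ x, x ∈ Subgroup.zpowers g) :
    orderOf (χ g) = orderOf χ :=
  orderOf_eq_orderOf_iff.mpr fun n => by rw [eq_iff hg (χ ^ n) 1, pow_apply_coe, one_apply_coe]

variable {F : Type*} [Field F] [Fintype F]

theorem apply_eq_one_iff_exists_pow {R : Type*} [CommMonoidWithZero R] (χ : MulChar F R)
    {x : F} (hx : x ≠ 0) : χ x = 1 ↔ ∃ c, c ≠ 0 ∧ x = c ^ orderOf χ := by
  obtain ⟨g, hg⟩ := IsCyclic.exists_generator (α := Fˣ)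
  constructor
  · intro h
    obtain ⟨j, hj⟩ := mem_powers_iff_mem_zpowers.mpr (hg (Units.mk0 x hx))
    have hxj : x = (g : F) ^ j := by
      rw [← Units.val_pow_eq_pow_val]; exact congrArg Units.val hj.symm
    obtain ⟨i, rfl⟩ : orderOf χ ∣ j := by
      rw [← orderOf_apply_generator χ hg]
      exact orderOf_dvd_of_pow_eq_one (by rw [← map_pow, ← hxj, h])
    exact ⟨(g : F) ^ i, by simp, by rw [hxj, ← pow_mul, mul_comm]⟩
  · rintro ⟨c, hc, rfl⟩
    rw [map_pow, ← pow_apply' χ χ.orderOf_pos.ne', pow_orderOf_eq_one,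
      one_apply (isUnit_iff_ne_zero.mpr hc)]

open Classical in
theorem sum_range_orderOf_pow_apply {R : Type*} [CommRing R] [IsDomain R] (χ : MulChar F R)
    (x : F) : ∑ s ∈ range (orderOf χ), (χ ^ s) x =
      if ∃ c, c ≠ 0 ∧ x = c ^ orderOf χ then (orderOf χ : R) else 0 := by
  rw [sum_range_pow_apply χ (pow_orderOf_eq_one χ)]
  rcases eq_or_ne x 0 with rfl | hx
  · simp [eq_comm (a := (0 : F)), χ.orderOf_pos.ne']
  · simp_rw [apply_eq_one_iff_exists_pow χ hx]

theorem sum_apply_mul_apply_sub {R : Type*} [CommRing R] (χ ψ : MulChar F R) {a : F}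
    (ha : a ≠ 0) : ∑ b, χ b * ψ (b - a) = (χ * ψ) a * jacobiSum (χ * ψ)⁻¹ ψ := by
  rw [jacobiSum, mul_sum]
  refine (Fintype.sum_equiv ((Equiv.inv F).trans (Equiv.mulLeft₀ a ha)) _ _ fun x => ?_).symm
  rcases eq_or_ne x 0 with rfl | hx
  · simp
  · simp only [Equiv.trans_apply, Equiv.inv_apply, Equiv.mulLeft₀_apply, inv_apply', mul_apply]
    rw [show a * x⁻¹ - a = a * x⁻¹ * (1 - x) by field_simp, map_mul, map_mul ψ, map_mul ψ]
    ring

end MulChar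

theorem FiniteField.pow_ne_neg_one {F : Type*} [Field F] [Fintype F] {k : ℕ} (hk : Even k)
    (hq : Fintype.card F % (2 * k) = k + 1) (c : F) : c ^ k ≠ -1 := by
  intro hc
  have hk0 : k ≠ 0 := by
    rintro rfl
    have := Fintype.one_lt_card (α := F)
    simp_all
  obtain ⟨m, hm⟩ : ∃ m, Fintype.card F - 1 = k * (2 * m + 1) := by
    obtain ⟨d, hd⟩ : ∃ d, 2 * k * d + (k + 1) = Fintype.card F :=
      ⟨_, hq ▸ Nat.div_add_mod (Fintype.card F) (2 * k)⟩
    exact ⟨d, by rw [← hd, ← add_assoc, Nat.add_sub_cancel]; ring⟩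
  have hchar : ringChar F ≠ 2 := by
    intro h2
    have := FiniteField.even_card_of_char_two h2
    obtain ⟨r, hr⟩ : Even (Fintype.card F - 1) := hm ▸ hk.mul_right _
    have := Fintype.card_pos (α := F)
    omega
  have hc0 : c ≠ 0 := by
    rintro rfl
    rw [zero_pow hk0, zero_eq_neg] at hc
    exact one_ne_zero hc
  have := FiniteField.pow_card_sub_one_eq_one c hc0
  rw [hm, pow_mul, hc, Odd.neg_one_pow ⟨m, rfl⟩] at this
  exact Ring.neg_one_ne_one_of_char_ne_two hchar this

theorem IsOfFinOrder.sum_range_orderOf_pow {G M : Type*} [Group G] [AddCommMonoid M] {x : G}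
    (hx : IsOfFinOrder x) [Fintype (Subgroup.zpowers x)] (f : G → M) :
    ∑ s ∈ range (orderOf x), f (x ^ s) = ∑ y : Subgroup.zpowers x, f y := by
  rw [← Fin.sum_univ_eq_sum_range (fun s => f (x ^ s)), ← (finEquivZPowers hx).sum_comp]
  rfl

theorem IsOfFinOrder.sum_range_orderOf_inv_pow_mul_pow {G M : Type*} [Group G] [AddCommMonoid M]
    {x : G} (hx : IsOfFinOrder x) (f : G → M) (t : ℕ) :
    ∑ s ∈ range (orderOf x), f (x ^ s * x ^ t)⁻¹ = ∑ s ∈ range (orderOf x), f (x ^ s) := by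
  let := Fintype.ofEquiv _ (finEquivZPowers hx)
  rw [hx.sum_range_orderOf_pow, hx.sum_range_orderOf_pow (fun y => f (y * x ^ t)⁻¹)]
  let z : Subgroup.zpowers x := ⟨x ^ t, t, zpow_natCast x t⟩
  exact Fintype.sum_equiv ((Equiv.mulRight z).trans (Equiv.inv _)) _ _ fun y => rfl

theorem Finset.sum_range_eq_add_sum_Icc {M : Type*} [AddCommMonoid M] {n : ℕ} (hn : 0 < n)
    (f : ℕ → M) : ∑ s ∈ range n, f s = f 0 + ∑ s ∈ Icc 1 (n - 1), f s := by
  rw [range_eq_Ico, sum_eq_sum_Ico_succ_bot hn]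
  congr 2

theorem ZMod.natCast_add_eq_zero_iff_eq_sub {k s t : ℕ} (hs : s ∈ Icc 1 (k - 1))
    (ht : t ∈ Icc 1 (k - 1)) :
    (s : ZMod k) + t = 0 ↔ t = k - s := by
  rw [mem_Icc] at hs ht
  rw [← Nat.cast_add, ZMod.natCast_eq_zero_iff]
  constructor
  · intro h
    have := Nat.eq_of_dvd_of_lt_two_mul (by omega) h (by omega)
    omega
  · intro h
    exact ⟨1, by omega⟩

namespace MulChar

variable {F : Type} [Field F] [Fintype F]

theorem sum_Icc_jacobiSum_pow {R : Type*} [CommRing R] [IsDomain R] (χ : MulChar F R) {s : ℕ}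
    (hs : s ∈ Icc 1 (orderOf χ - 1)) :
    ∑ t ∈ Icc 1 (orderOf χ - 1), jacobiSum (χ ^ s) (χ ^ t) =
      ∑ t ∈ Icc 1 (orderOf χ - 1),
        (if (s : ZMod (orderOf χ)) + t ≠ 0 then jacobiSum (χ ^ s) (χ ^ t) else 0) - χ (-1) ^ s := by
  have hs' := mem_Icc.mp hs
  have hks : orderOf χ - s ∈ Icc 1 (orderOf χ - 1) := mem_Icc.mpr (by omega)
  have hsplit : ∀ t ∈ Icc 1 (orderOf χ - 1), jacobiSum (χ ^ s) (χ ^ t) =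
      (if (s : ZMod (orderOf χ)) + t ≠ 0 then jacobiSum (χ ^ s) (χ ^ t) else 0) +
        if orderOf χ - s = t then jacobiSum (χ ^ s) (χ ^ (orderOf χ - s)) else 0 := by
    intro t ht
    simp only [ne_eq, ZMod.natCast_add_eq_zero_iff_eq_sub hs ht, eq_comm (a := orderOf χ - s)]
    split_ifs with h <;> simp [h]
  have hinv : χ ^ (orderOf χ - s) = (χ ^ s)⁻¹ :=
    eq_inv_of_mul_eq_one_right <| by
      rw [← pow_add, Nat.add_sub_cancel' (by omega), pow_orderOf_eq_one]
  rw [sum_congr rfl hsplit, sum_add_distrib, sum_ite_eq, if_pos hks, hinv,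
    jacobiSum_nontrivial_inv (pow_ne_one_of_lt_orderOf (by omega) (by omega)),
    pow_apply' χ (by omega), sub_eq_add_neg]

theorem sum_range_sum_range_jacobiSum_pow (χ : MulChar F ℂ) (hχ : χ (-1) ≠ 1) :
    ∑ s ∈ range (orderOf χ), ∑ t ∈ range (orderOf χ), jacobiSum (χ ^ s) (χ ^ t) =
      Rk (orderOf χ) χ + Fintype.card F - 2 * orderOf χ + 1 := by
  have hk := χ.orderOf_pos
  have hne : ∀ s ∈ Icc 1 (orderOf χ - 1), χ ^ s ≠ 1 := fun s hs =>
    pow_ne_one_of_lt_orderOf (by grind) (by grind)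
  have hsign : ∑ s ∈ Icc 1 (orderOf χ - 1), χ (-1) ^ s = -1 := by
    have h := sum_range_pow_apply χ (pow_orderOf_eq_one χ) (-1)
    rw [if_neg hχ, sum_range_eq_add_sum_Icc hk, pow_zero, one_apply isUnit_one.neg,
      sum_congr rfl fun s hs => pow_apply' χ (by grind) (-1)] at h
    exact eq_neg_of_add_eq_zero_right h
  have hRk : Rk (orderOf χ) χ = ∑ s ∈ Icc 1 (orderOf χ - 1), ∑ t ∈ Icc 1 (orderOf χ - 1),
      if (s : ZMod (orderOf χ)) + t ≠ 0 then jacobiSum (χ ^ s) (χ ^ t) else 0 := rfl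
  simp_rw [sum_range_eq_add_sum_Icc hk, pow_zero]
  rw [jacobiSum_one_one, sum_congr rfl fun t ht => jacobiSum_one_nontrivial (hne t ht),
    sum_add_distrib, sum_congr rfl fun s hs => (jacobiSum_comm _ _).trans
      (jacobiSum_one_nontrivial (hne s hs)),
    sum_congr rfl fun s hs => sum_Icc_jacobiSum_pow χ hs, sum_sub_distrib, hsign, ← hRk,
    sum_const, Nat.card_Icc, nsmul_eq_mul, add_tsub_cancel_right, Nat.cast_pred hk]
  ring

end MulChar

theorem stmt_16_general {F : Type} [Field F] [Fintype F] (q k : ℕ)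
    (hkeven : Even k) (hq : Fintype.card F = q)
    (hmod : q % (2 * k) = k + 1)
    (χ : MulChar F ℂ) (hχ : orderOf χ = k)
    (a : F) (ha : ∃ c : F, c ≠ 0 ∧ a = c ^ k) :
    (k : ℂ) ^ 2 *
        ({b : F | (∃ c : F, c ≠ 0 ∧ b = c ^ k) ∧ ∃ c : F, c ≠ 0 ∧ b - a = c ^ k}.ncard : ℕ) =
      Rk k χ + (q : ℂ) - 2 * (k : ℂ) + 1 := by
  classical
  subst hq hχ
  have hneg : χ (-1) ≠ 1 := fun h => by
    obtain ⟨c, -, hc⟩ := (χ.apply_eq_one_iff_exists_pow (neg_ne_zero.mpr one_ne_zero)).mp h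
    exact FiniteField.pow_ne_neg_one hkeven hmod c hc.symm
  obtain ⟨c, hc, rfl⟩ := ha
  have hunit : IsUnit (c ^ orderOf χ) := (pow_ne_zero _ hc).isUnit
  have hχa (s t : ℕ) : (χ ^ s * χ ^ t) (c ^ orderOf χ) = 1 := by
    rw [← pow_add, ← hunit.unit_spec, MulChar.pow_apply_coe, hunit.unit_spec,
      (χ.apply_eq_one_iff_exists_pow hunit.ne_zero).mpr ⟨c, hc, rfl⟩, one_pow]
  have hχfin : IsOfFinOrder χ := orderOf_pos_iff.mp χ.orderOf_pos
  calc
    _ = ∑ b, (∑ s ∈ range (orderOf χ), (χ ^ s) b) *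
        ∑ t ∈ range (orderOf χ), (χ ^ t) (b - c ^ orderOf χ) := by
      simp_rw [MulChar.sum_range_orderOf_pow_apply]
      rw [Set.ncard_eq_toFinset_card', Set.toFinset_ofPred, card_filter, Nat.cast_sum, mul_sum]
      refine sum_congr rfl fun b _ => ?_
      split_ifs <;> simp_all [sq]
    _ = ∑ s ∈ range (orderOf χ), ∑ t ∈ range (orderOf χ),
        ∑ b, (χ ^ s) b * (χ ^ t) (b - c ^ orderOf χ) := by
      simp_rw [sum_mul_sum]
      rw [sum_comm]
      exact sum_congr rfl fun s _ => sum_comm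
    _ = ∑ s ∈ range (orderOf χ), ∑ t ∈ range (orderOf χ),
        jacobiSum (χ ^ s * χ ^ t)⁻¹ (χ ^ t) := by
      simp_rw [MulChar.sum_apply_mul_apply_sub _ _ hunit.ne_zero, hχa, one_mul]
    _ = ∑ s ∈ range (orderOf χ), ∑ t ∈ range (orderOf χ), jacobiSum (χ ^ s) (χ ^ t) := by
      rw [sum_comm, sum_comm (f := fun s t => jacobiSum (χ ^ s) (χ ^ t))]
      exact sum_congr rfl fun t _ =>
        hχfin.sum_range_orderOf_inv_pow_mul_pow (jacobiSum · (χ ^ t)) t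
    _ = _ := χ.sum_range_sum_range_jacobiSum_pow hneg

theorem stmt_16 {F : Type} [Field F] [Fintype F] (q k : ℕ)
    (hk : 2 ≤ k) (hkeven : Even k) (hq : Fintype.card F = q)
    (hmod : q % (2 * k) = k + 1)
    (χ : MulChar F ℂ) (hχ : orderOf χ = k)
    (a : F) (ha : ∃ c : F, c ≠ 0 ∧ a = c ^ k) :
    (k : ℂ) ^ 2 *
        ({b : F | (∃ c : F, c ≠ 0 ∧ b = c ^ k) ∧ ∃ c : F, c ≠ 0 ∧ b - a = c ^ k}.ncard : ℕ) =
      Rk k χ + (q : ℂ) - 2 * (k : ℂ) + 1 :=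
  stmt_16_general q k hkeven hq hmod χ hχ a ha
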